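/- Let μ be a probability measure on [0, ∞), v(−λ) = ∫ 1/(x+λ) dμ(x), and for σ², α_t², α_s², γ > 0, ρ ∈ [0,1), C > 0, set λ† = γσ²/α_t² and λ* = γσ²/(α_t²(1 − ρ²α_s²/(α_s² + C))). Then σ²/(λ* v(−λ*)) ≤ σ²/(λ† v(−λ†)). That is, the minimal limiting prediction risk of angle-based transfer learning is no larger than the minimal risk of the target-only ridge estimator. -/
import Mathlib

open MeasureTheory

lemma aux_int (μ : Measure ℝ) [IsProbabilityMeasure μ] (hμ : ∀ᵐ x ∂μ, 0 ≤ x)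
    {a : ℝ} (ha : 0 < a) : Integrable (fun x => a / (x + a)) μ := by
  apply Integrable.mono' (integrable_const 1)
  · exact (measurable_const.div ((measurable_id.add_const a))).aestronglyMeasurable
  · filter_upwards [hμ] with x hx
    have hxa : 0 < x + a := by linarith
    rw [Real.norm_eq_abs, abs_of_nonneg (by positivity)]
    rw [div_le_one hxa]; linarith

lemma aux_pos (μ : Measure ℝ) [IsProbabilityMeasure μ] (hμ : ∀ᵐ x ∂μ, 0 ≤ x)
    {a : ℝ} (ha : 0 < a) : 0 < ∫ x, a / (x + a) ∂μ := by
  have hint := aux_int μ hμ ha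
  have : (0:ℝ) < ∫ x, a / (x + a) ∂μ ↔ _ := integral_pos_iff_support_of_nonneg_ae
    (by filter_upwards [hμ] with x hx; positivity) hint
  rw [this]
  have : {x : ℝ | 0 ≤ x} ⊆ Function.support (fun x => a / (x + a)) ∪ {x | ¬ (0 ≤ x)} := by
    intro x hx
    left
    simp only [Function.mem_support]
    have : 0 < x + a := by have := hx.out; linarith
    positivity
  have h1 : μ {x : ℝ | ¬ (0 ≤ x)} = 0 := hμ
  have h2 : μ {x : ℝ | 0 ≤ x} = 1 := by
    have := measure_add_measure_compl (μ := μ) (s := {x : ℝ | 0 ≤ x}) (measurableSet_le measurable_const measurable_id)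
    simp only [measure_univ] at this
    have hc : μ ({x : ℝ | 0 ≤ x}ᶜ) = 0 := h1
    rw [hc, add_zero] at this; exact this
  have := le_trans h2.ge ((measure_mono this).trans (measure_union_le _ _))
  rw [h1, add_zero] at this
  exact lt_of_lt_of_le (by norm_num) this

lemma aux_mono (μ : Measure ℝ) [IsProbabilityMeasure μ] (hμ : ∀ᵐ x ∂μ, 0 ≤ x)
    {a b : ℝ} (ha : 0 < a) (hab : a ≤ b) :
    ∫ x, a / (x + a) ∂μ ≤ ∫ x, b / (x + b) ∂μ := by
  have hb : 0 < b := lt_of_lt_of_le ha hab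
  apply integral_mono_ae (aux_int μ hμ ha) (aux_int μ hμ hb)
  filter_upwards [hμ] with x hx
  rw [div_le_div_iff₀ (by linarith) (by linarith)]
  nlinarith

/-- No negative transfer: with `v(−λ) = ∫ 1/(x+λ) dμ` for a probability
measure `μ` on `[0,∞)`, the minimal angleTL risk `σ²/(λ* v(−λ*))` is no larger
than the minimal target-only risk `σ²/(λ† v(−λ†))`. -/
theorem stmt11 (μ : Measure ℝ) [IsProbabilityMeasure μ] (hμ : ∀ᵐ x ∂μ, 0 ≤ x)
    (γ σ2 αt2 αs2 ρ C : ℝ) (hγ : 0 < γ) (hσ : 0 < σ2) (hαt : 0 < αt2)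
    (hαs : 0 < αs2) (hρ0 : 0 ≤ ρ) (hρ1 : ρ < 1) (hC : 0 < C) :
    let v : ℝ → ℝ := fun lam => ∫ x, 1 / (x + lam) ∂μ
    let lamd : ℝ := γ * σ2 / αt2
    let lams : ℝ := γ * σ2 / (αt2 * (1 - ρ ^ 2 * αs2 / (αs2 + C)))
    σ2 / (lams * v lams) ≤ σ2 / (lamd * v lamd) := by
  intro v lamd lams
  have hfrac : ρ ^ 2 * αs2 / (αs2 + C) < 1 := by
    rw [div_lt_one (by linarith)]
    have hρ2 : ρ ^ 2 < 1 := by nlinarith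
    nlinarith [mul_pos (sub_pos.mpr hρ2) hαs]
  have hfrac0 : 0 ≤ ρ ^ 2 * αs2 / (αs2 + C) := by positivity
  have hden : 0 < 1 - ρ ^ 2 * αs2 / (αs2 + C) := by linarith
  have hd : 0 < lamd := by positivity
  have hs : 0 < lams := by show 0 < γ * σ2 / _; positivity
  have hle : lamd ≤ lams := by
    show γ * σ2 / αt2 ≤ γ * σ2 / (αt2 * (1 - ρ ^ 2 * αs2 / (αs2 + C)))
    apply div_le_div_of_nonneg_left (by positivity) (by positivity)
    nlinarith
  have key : ∀ lam : ℝ, lam * v lam = ∫ x, lam / (x + lam) ∂μ := by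
    intro lam
    simp only [v]
    rw [← integral_const_mul]
    congr 1; ext x; ring
  have h1 : 0 < lamd * v lamd := by rw [key]; exact aux_pos μ hμ hd
  have h2 : lamd * v lamd ≤ lams * v lams := by
    rw [key, key]; exact aux_mono μ hμ hd hle
  exact div_le_div_of_nonneg_left hσ.le h1 h2
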